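/- arXiv:1901.04957 — 3 statements merged into one kernel-verified Lean document; each statement's English description precedes it below -/
import Mathlib

section
/- Let c > 0, let i ≥ 2, and let I_1, ..., I_i > 0, S_1, ..., S_{i-1} < 0, L_1, ..., L_{i-1} > 0, L̄ > 0 be real numbers with Σ_{j=1}^{i} I_j < c. Define V^max = (I_i / (c (c - Σ_{j=1}^{i-1} I_j))) · (c L̄ - Σ_{j=1}^{i-1} S_j L_j) and V^H = (L̄/c) Σ_{j=1}^{i} I_j - Σ_{j=1}^{i-1} S_j L_j / c. Then V^max < V^H. -/
/-!
With `A = ∑_{j<i} I_j`, `B = ∑_{j<i} S_j L_j` and `x = I_i`, the gap between the two bounds factors as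
`V^H - V^max = (c - A - x) (L̄ A - B) / (c (c - A))`.
The first factor is positive by the rate-allocation condition, and the second because `A ≥ 0`,
`L̄ > 0`, and `B < 0` as a nonempty sum of negative terms.
-/

open Finset

section CreditBounds

variable {K : Type*} [Field K]

/-- `V^max` with `A = ∑_{j<i} I_j`, `B = ∑_{j<i} S_j L_j` and `x = I_i`. -/
def creditBound (c Lbar A B x : K) : K :=
  x / (c * (c - A)) * (c * Lbar - B)

/-- `V^{max,H}` in the same variables as `creditBound`. -/
def creditBoundH (c Lbar A B x : K) : K :=
  Lbar / c * (A + x) - B / c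

theorem creditBoundH_sub_creditBound {c A : K} (hc : c ≠ 0) (hcA : c - A ≠ 0) (Lbar B x : K) :
    creditBoundH c Lbar A B x - creditBound c Lbar A B x
      = (c - A - x) * (Lbar * A - B) / (c * (c - A)) := by
  unfold creditBound creditBoundH
  field_simp
  ring

theorem creditBound_lt_creditBoundH [LinearOrder K] [IsStrictOrderedRing K] {c Lbar A B x : K} (hc : 0 < c) (hx : 0 ≤ x)
    (hsum : A + x < c) (hB : B < Lbar * A) :
    creditBound c Lbar A B x < creditBoundH c Lbar A B x := by
  have hcA : 0 < c - A := by linarith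
  rw [← sub_pos, creditBoundH_sub_creditBound hc.ne' hcA.ne']
  exact div_pos (mul_pos (by linarith) (by linarith)) (mul_pos hc hcA)

end CreditBounds

theorem sum_Icc_one_eq_sum_Icc_pred_add {M : Type*} [AddCommMonoid M] (f : ℕ → M) {n : ℕ}
    (hn : 1 ≤ n) : ∑ j ∈ Icc 1 n, f j = ∑ j ∈ Icc 1 (n - 1), f j + f n := by
  obtain ⟨m, rfl⟩ := Nat.exists_eq_add_of_le' hn
  exact sum_Icc_succ_top (by omega) f

/-- Proposition 2(3): the new credit bound `V^max` is strictly
smaller than the H-bound `V^H` for every class `i ≥ 2`. -/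
theorem credit_bound_lt_H_bound
    (c : ℝ) (hc : 0 < c) (i : ℕ) (hi : 2 ≤ i)
    (I S L : ℕ → ℝ) (Lbar : ℝ)
    (hI : ∀ j ∈ Icc 1 i, 0 < I j)
    (hS : ∀ j ∈ Icc 1 (i - 1), S j < 0)
    (hL : ∀ j ∈ Icc 1 (i - 1), 0 < L j)
    (hLbar : 0 < Lbar)
    (hsum : ∑ j ∈ Icc 1 i, I j < c) :
    (I i / (c * (c - ∑ j ∈ Icc 1 (i - 1), I j)))
        * (c * Lbar - ∑ j ∈ Icc 1 (i - 1), S j * L j)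
      < (Lbar / c) * ∑ j ∈ Icc 1 i, I j - (∑ j ∈ Icc 1 (i - 1), S j * L j) / c := by
  have hIi : 0 < I i := hI i (mem_Icc.2 ⟨by omega, le_rfl⟩)
  have hA : 0 ≤ ∑ j ∈ Icc 1 (i - 1), I j :=
    sum_nonneg fun j hj => (hI j (Icc_subset_Icc_right (Nat.sub_le i 1) hj)).le
  have hB : ∑ j ∈ Icc 1 (i - 1), S j * L j < 0 :=
    sum_neg (fun j hj => mul_neg_of_neg_of_pos (hS j hj) (hL j hj))
      (nonempty_Icc.2 (by omega))
  rw [sum_Icc_one_eq_sum_Icc_pred_add I (n := i) (by omega)] at hsum ⊢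
  exact creditBound_lt_creditBoundH hc hIi.le hsum
    (hB.trans_le (mul_nonneg hLbar.le hA))
end

section
/- Let c > 0 and let I_1, I_2, L_1, L_2, L_BE be real numbers with 0 < I_1 < c, I_2 > 0, L_1 > 0, L_2 > 0, L_BE > 0, and set S_1 = I_1 - c. Define V_2^max = (I_2 / (c (c - I_1))) (c L_BE - S_1 L_1) and V_2^{max,J} = (I_2/c) (L_BE + L_1 + max(L_2, L_BE) · I_1 / (-S_1)). Then V_2^max ≤ V_2^{max,J}, and the inequality is strict if L_2 > L_BE. -/
/-- Proposition 2(2): for `p = 2` classes, the new bound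
`V_2^max` is at most the J-bound `V_2^{max,J}`, strictly if `L₂ > L_BE`. -/
theorem class_two_bound_le_J_bound
    (c I₁ I₂ L₁ L₂ LBE : ℝ) (hc : 0 < c)
    (hI₁ : 0 < I₁) (hI₁c : I₁ < c) (hI₂ : 0 < I₂)
    (hL₁ : 0 < L₁) (hL₂ : 0 < L₂) (hLBE : 0 < LBE)
    (S₁ : ℝ) (hS₁ : S₁ = I₁ - c) :
    (I₂ / (c * (c - I₁))) * (c * LBE - S₁ * L₁)
      ≤ (I₂ / c) * (LBE + L₁ + max L₂ LBE * I₁ / (-S₁)) ∧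
    (L₂ > LBE →
      (I₂ / (c * (c - I₁))) * (c * LBE - S₁ * L₁)
        < (I₂ / c) * (LBE + L₁ + max L₂ LBE * I₁ / (-S₁))) := by
  subst hS₁
  have hcI : (0:ℝ) < c - I₁ := by linarith
  have h3 : -(I₁ - c) = c - I₁ := by ring
  rw [h3]
  set M := max L₂ LBE with hMdef
  have hM : LBE ≤ M := le_max_right _ _
  have key : ∀ x y : ℝ, LBE ≤ M →
      (I₂ / (c * (c - I₁))) * (c * LBE - (I₁ - c) * L₁)
        + (I₂ / (c * (c - I₁))) * ((M - LBE) * I₁)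
      = (I₂ / c) * (LBE + L₁ + M * I₁ / (c - I₁)) := by
    intro _ _ _
    field_simp
    ring
  constructor
  · rw [← key 0 0 hM]
    have : 0 ≤ (I₂ / (c * (c - I₁))) * ((M - LBE) * I₁) := by
      apply mul_nonneg (by positivity)
      exact mul_nonneg (by linarith) hI₁.le
    linarith
  · intro hgt
    have hM2 : M = L₂ := max_eq_left hgt.le
    rw [← key 0 0 hM]
    have : 0 < (I₂ / (c * (c - I₁))) * ((M - LBE) * I₁) := by
      apply mul_pos (by positivity)
      apply mul_pos _ hI₁
      rw [hM2]; linarith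
    linarith
end

section
/- Let c > 0 and let I_1, I_2, L_1, L_2, L_BE be real numbers with I_1 > 0, I_2 > 0, I_1 + I_2 < c, L_1 > 0, 0 < L_2 < L_BE, and set S_1 = I_1 - c. Define V_2^{max,J} = (I_2/c) (L_BE + L_1 + max(L_2, L_BE) · I_1 / (-S_1)) and V_2^{max,H} = (L_BE/c)(I_1 + I_2) - S_1 L_1 / c. Then V_2^{max,J} < V_2^{max,H}. -/
/-- for `p = 2` classes with `L₂ < L_BE`, the J-bound is strictly
smaller than the H-bound. -/
theorem J_bound_lt_H_bound_of_L2_lt_LBE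
    (c I₁ I₂ L₁ L₂ LBE : ℝ) (hc : 0 < c)
    (hI₁ : 0 < I₁) (hI₂ : 0 < I₂) (hsum : I₁ + I₂ < c)
    (hL₁ : 0 < L₁) (hL₂ : 0 < L₂) (hL₂BE : L₂ < LBE)
    (S₁ : ℝ) (hS₁ : S₁ = I₁ - c) :
    (I₂ / c) * (LBE + L₁ + max L₂ LBE * I₁ / (-S₁))
      < (LBE / c) * (I₁ + I₂) - S₁ * L₁ / c := by
  subst hS₁
  rw [max_eq_right hL₂BE.le]
  have hd : 0 < c - I₁ := by linarith
  have hI₂d : I₂ < c - I₁ := by linarith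
  have hLBE : 0 < LBE := hL₂.trans hL₂BE
  have key : I₂ * (LBE + L₁ + LBE * I₁ / (c - I₁)) < (LBE * (I₁ + I₂) - (I₁ - c) * L₁) := by
    have h1 : LBE * I₁ / (c - I₁) * I₂ < LBE * I₁ := by
      rw [div_mul_eq_mul_div, div_lt_iff₀ hd]
      nlinarith [mul_lt_mul_of_pos_left hI₂d (mul_pos hLBE hI₁)]
    nlinarith
  calc I₂ / c * (LBE + L₁ + LBE * I₁ / -(I₁ - c))
      = I₂ * (LBE + L₁ + LBE * I₁ / (c - I₁)) / c := by ring_nf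
    _ < (LBE * (I₁ + I₂) - (I₁ - c) * L₁) / c := by
        gcongr
    _ = LBE / c * (I₁ + I₂) - (I₁ - c) * L₁ / c := by ring
end
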